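/- arXiv:2010.05005 — 4 statements merged into one kernel-verified Lean document; each statement's English description precedes it below -/
import Mathlib

section
/- For a full binary tree T with n leaves labeled by characters c_1,…,c_n sorted so that characters at smaller depth come first, with frequencies f_1,…,f_n and prefix sums P_i = f_1 + … + f_i, the weighted external path length len(T) = Σ_c freq(c)·d_T(c) equals Σ_{ℓ=0}^{h−1} P_{2·i_ℓ − i_{ℓ+1}}, where i_ℓ is the number of internal nodes at depth ≥ ℓ and h is the height of T. -/
/-- A full binary tree: every node is a leaf or has exactly two children. -/
inductive FBT where
  | leaf : FBT
  | node : FBT → FBT → FBT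

namespace FBT

/-- Multiset of depths of the leaves (root at depth 0). -/
def leafDepths : FBT → Multiset ℕ
  | leaf => {0}
  | node l r => (l.leafDepths + r.leafDepths).map (· + 1)

/-- Multiset of depths of the internal nodes (root at depth 0). -/
def internalDepths : FBT → Multiset ℕ
  | leaf => 0
  | node l r => 0 ::ₘ (l.internalDepths + r.internalDepths).map (· + 1)

/-- Number of leaves. -/
def numLeaves (t : FBT) : ℕ := Multiset.card t.leafDepths

/-- Height = maximum leaf depth. -/
def height : FBT → ℕ
  | leaf => 0
  | node l r => max l.height r.height + 1

/-- `iAt t ℓ` = number of internal nodes at depth ≥ ℓ. -/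
def iAt (t : FBT) (ℓ : ℕ) : ℕ :=
  Multiset.card (t.internalDepths.filter (fun d => ℓ ≤ d))

end FBT

/-!
A leaf at depth `d` contributes its frequency once to each level `ℓ < d`, so `len(T)` is the
sum over levels `ℓ < h` of the frequencies of the leaves deeper than `ℓ`. Since the deepest
leaves carry the first frequencies, these are `f 1, …, f m` with `m` the number of leaves at
depth `≥ ℓ + 1`. Finally, the nodes at depth `≥ ℓ + 1` are exactly the children of the internal
nodes at depth `≥ ℓ`, so `m + i_{ℓ+1} = 2 i_ℓ`.
-/

theorem Finset.sum_range_ite_lt {M : Type*} [AddCommMonoid M] {c n : ℕ} (h : c ≤ n) (g : ℕ → M) :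
    ∑ i ∈ Finset.range n, (if i < c then g i else 0) = ∑ i ∈ Finset.range c, g i := by
  rw [← Finset.sum_filter]
  congr 1
  ext i
  simp only [Finset.mem_filter, Finset.mem_range]
  omega

theorem Finset.sum_Icc_one_eq_sum_range {M : Type*} [AddCommMonoid M] (f : ℕ → M) (n : ℕ) :
    ∑ j ∈ Finset.Icc 1 n, f j = ∑ i ∈ Finset.range n, f (i + 1) := by
  rw [← Finset.Ico_add_one_right_eq_Icc, Finset.range_eq_Ico, Finset.sum_Ico_add']

theorem Multiset.card_filter_succ_le_map_succ (s : Multiset ℕ) (ℓ : ℕ) :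
    Multiset.card ((s.map (· + 1)).filter (ℓ + 1 ≤ ·)) = Multiset.card (s.filter (ℓ ≤ ·)) := by
  simp [Multiset.filter_map]

theorem List.le_getD_iff_lt_countP {L : List ℕ} (hL : L.Pairwise (· ≥ ·)) (v : ℕ) {i : ℕ}
    (hi : i < L.length) : v ≤ L.getD i 0 ↔ i < L.countP (v ≤ ·) := by
  induction L generalizing i with
  | nil => simp at hi
  | cons a L ih =>
    obtain ⟨ha, hL⟩ := List.pairwise_cons.mp hL
    have hcount (hva : ¬v ≤ a) : L.countP (v ≤ ·) = 0 :=
      List.countP_eq_zero.mpr fun b hb => by have := ha b hb; simp only [decide_eq_true_eq]; omega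
    cases i with
    | zero => by_cases hva : v ≤ a <;> simp [hva, hcount]
    | succ i =>
      rw [List.getD_cons_succ, List.countP_cons, ih hL (by simpa using hi)]
      by_cases hva : v ≤ a <;> simp [hva, hcount]

theorem List.sum_getD_smul_eq_sum_range_countP {M : Type*} [AddCommMonoid M] {L : List ℕ}
    (hL : L.Pairwise (· ≥ ·)) {h : ℕ} (hh : ∀ d ∈ L, d ≤ h) (w : ℕ → M) :
    ∑ i ∈ Finset.range L.length, L.getD i 0 • w i =
      ∑ ℓ ∈ Finset.range h, ∑ i ∈ Finset.range (L.countP (ℓ + 1 ≤ ·)), w i := by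
  calc ∑ i ∈ Finset.range L.length, L.getD i 0 • w i
      = ∑ i ∈ Finset.range L.length, ∑ ℓ ∈ Finset.range h,
          if ℓ < L.getD i 0 then w i else 0 := by
        refine Finset.sum_congr rfl fun i hi => ?_
        have hih : L.getD i 0 ≤ h :=
          hh _ (List.getD_eq_getElem _ _ (Finset.mem_range.mp hi) ▸ List.getElem_mem _)
        rw [Finset.sum_range_ite_lt hih, Finset.sum_const, Finset.card_range]
    _ = ∑ ℓ ∈ Finset.range h, ∑ i ∈ Finset.range L.length,
          if i < L.countP (ℓ + 1 ≤ ·) then w i else 0 := by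
        rw [Finset.sum_comm]
        refine Finset.sum_congr rfl fun ℓ _ => Finset.sum_congr rfl fun i hi => ?_
        exact if_congr
          (Nat.succ_le_iff.symm.trans (List.le_getD_iff_lt_countP hL _ (Finset.mem_range.mp hi)))
          rfl rfl
    _ = _ := Finset.sum_congr rfl fun ℓ _ => Finset.sum_range_ite_lt List.countP_le_length w

namespace FBT

def lAt (t : FBT) (ℓ : ℕ) : ℕ :=
  Multiset.card (t.leafDepths.filter (fun d => ℓ ≤ d))

theorem le_height_of_mem_leafDepths {t : FBT} {d : ℕ} (hd : d ∈ t.leafDepths) :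
    d ≤ t.height := by
  induction t generalizing d with
  | leaf => simp_all [leafDepths, height]
  | node l r ihl ihr =>
    obtain ⟨e, he, rfl⟩ := Multiset.mem_map.mp hd
    rcases Multiset.mem_add.mp he with he | he
    · have := ihl he; simp only [height]; omega
    · have := ihr he; simp only [height]; omega

theorem card_leafDepths (t : FBT) :
    Multiset.card t.leafDepths = Multiset.card t.internalDepths + 1 := by
  induction t with
  | leaf => rfl
  | node l r ihl ihr => simp [leafDepths, internalDepths, ihl, ihr]; omega

@[simp] theorem lAt_zero (t : FBT) : t.lAt 0 = Multiset.card t.leafDepths := by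
  simp [lAt]

@[simp] theorem iAt_zero (t : FBT) : t.iAt 0 = Multiset.card t.internalDepths := by
  simp [iAt]

@[simp] theorem lAt_leaf_succ (ℓ : ℕ) : leaf.lAt (ℓ + 1) = 0 := by
  simp [lAt, leafDepths]

@[simp] theorem iAt_leaf (ℓ : ℕ) : leaf.iAt ℓ = 0 := by
  simp [iAt, internalDepths]

@[simp] theorem lAt_node_succ (l r : FBT) (ℓ : ℕ) :
    (node l r).lAt (ℓ + 1) = l.lAt ℓ + r.lAt ℓ := by
  rw [lAt, leafDepths, Multiset.card_filter_succ_le_map_succ, Multiset.filter_add,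
    Multiset.card_add]
  rfl

@[simp] theorem iAt_node_succ (l r : FBT) (ℓ : ℕ) :
    (node l r).iAt (ℓ + 1) = l.iAt ℓ + r.iAt ℓ := by
  rw [iAt, internalDepths, Multiset.filter_cons_of_neg _ (by omega),
    Multiset.card_filter_succ_le_map_succ, Multiset.filter_add, Multiset.card_add]
  rfl

theorem lAt_succ_add_iAt_succ (t : FBT) (ℓ : ℕ) :
    t.lAt (ℓ + 1) + t.iAt (ℓ + 1) = 2 * t.iAt ℓ := by
  induction t generalizing ℓ with
  | leaf => simp
  | node l r ihl ihr =>
    cases ℓ with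
    | zero =>
      simp only [lAt_node_succ, iAt_node_succ, lAt_zero, iAt_zero, card_leafDepths]
      simp [internalDepths]
      omega
    | succ ℓ =>
      simp only [lAt_node_succ, iAt_node_succ]
      have := ihl ℓ
      have := ihr ℓ
      omega

end FBT

/-- For a full binary tree `t` with `n` leaves whose depths, listed in nonincreasing order,
are `ds` (so that the frequency `f 1` of the first character is paired with the deepest leaf,
i.e. frequencies are indexed consistently with nondecreasing depth of the corresponding
leaves when read backwards), with prefix sums `P i = f 1 + ⋯ + f i`, the weighted external
path length `len(T) = Σ_c freq(c)·d_T(c)` equals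
`Σ_{ℓ=0}^{h−1} P_{2·i_ℓ − i_{ℓ+1}}` where `i_ℓ` is the number of internal nodes at
depth ≥ ℓ and `h` is the height of the tree (`P 0 = 0`). -/
theorem stmt_2 (t : FBT) (f : ℕ → ℕ) (ds : List ℕ)
    (hds : ds = (Multiset.sort t.leafDepths (· ≤ ·)).reverse) :
    (∑ i ∈ Finset.range t.numLeaves, f (i + 1) * ds.getD i 0) =
      ∑ ℓ ∈ Finset.range t.height,
        ∑ j ∈ Finset.Icc 1 (2 * t.iAt ℓ - t.iAt (ℓ + 1)), f j := by
  have hcoe : (ds : Multiset ℕ) = t.leafDepths := by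
    rw [hds, Multiset.coe_reverse, Multiset.sort_eq]
  have hsorted : ds.Pairwise (· ≥ ·) := by
    rw [hds, List.pairwise_reverse]
    exact Multiset.pairwise_sort _ _
  have hcount (ℓ : ℕ) : ds.countP (ℓ ≤ ·) = t.lAt ℓ := by
    rw [FBT.lAt, ← hcoe, Multiset.filter_coe, Multiset.coe_card, List.countP_eq_length_filter]
  have hleaves : t.numLeaves = ds.length := by
    rw [FBT.numLeaves, ← hcoe, Multiset.coe_card]
  calc (∑ i ∈ Finset.range t.numLeaves, f (i + 1) * ds.getD i 0)
      = ∑ i ∈ Finset.range ds.length, ds.getD i 0 • f (i + 1) := by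
        simp only [hleaves, smul_eq_mul, mul_comm]
    _ = ∑ ℓ ∈ Finset.range t.height, ∑ i ∈ Finset.range (t.lAt (ℓ + 1)), f (i + 1) := by
        have hbound (d : ℕ) (hd : d ∈ ds) : d ≤ t.height :=
          FBT.le_height_of_mem_leafDepths (hcoe ▸ Multiset.mem_coe.mpr hd)
        simp only [List.sum_getD_smul_eq_sum_range_countP hsorted hbound, hcount]
    _ = _ := by
        simp only [Finset.sum_Icc_one_eq_sum_range, ← FBT.lAt_succ_add_iAt_succ,
          Nat.add_sub_cancel]
end

section
/- Given any rooted binary tree T (internal nodes may have 1 or 2 children, and leaves may or may not be labeled) in which each character of a set C appears as a leaf, there exists a valid prefix tree T' for C (full binary, leaves exactly C) such that the height of T' is at most the height of T and d_{T'}(c) ≤ d_T(c) for every c ∈ C. -/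
/-- A labeled full binary tree (prefix tree): leaves carry characters,
every internal node has exactly two children. -/
inductive LTree (α : Type) where
  | leaf (a : α) : LTree α
  | node (l r : LTree α) : LTree α

namespace LTree

/-- The multiset of (label, depth) pairs of the leaves (root at depth 0). -/
def labDepths {α : Type} : LTree α → Multiset (α × ℕ)
  | leaf a => {(a, 0)}
  | node l r => (l.labDepths + r.labDepths).map (fun p => (p.1, p.2 + 1))

/-- Height = maximum leaf depth. -/
def height {α : Type} : LTree α → ℕ
  | leaf _ => 0
  | node l r => max l.height r.height + 1

end LTree

/-- `t` is a (full binary) prefix tree for the alphabet `C` whose leaves are exactly the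
characters of `C`, the character `c` being at depth `d c`. -/
def IsPrefixTree {α : Type} (C : Finset α) (t : LTree α) (d : α → ℕ) : Prop :=
  t.labDepths = C.val.map (fun c => (c, d c))

/-- A general rooted binary tree: internal nodes may have 1 or 2 children and
leaves may or may not be labeled by a character. -/
inductive RTree (α : Type) where
  | leaf (a : Option α) : RTree α
  | node1 (t : RTree α) : RTree α
  | node2 (l r : RTree α) : RTree α

namespace RTree

/-- The multiset of (label, depth) pairs of the labeled leaves (root at depth 0). -/
def labDepths {α : Type} : RTree α → Multiset (α × ℕ)
  | leaf none => 0
  | leaf (some a) => {(a, 0)}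
  | node1 t => t.labDepths.map (fun p => (p.1, p.2 + 1))
  | node2 l r => (l.labDepths + r.labDepths).map (fun p => (p.1, p.2 + 1))

/-- Height of the tree. -/
def height {α : Type} : RTree α → ℕ
  | leaf _ => 0
  | node1 t => t.height + 1
  | node2 l r => max l.height r.height + 1

end RTree

lemma mem_map_succ {α : Type} (s : Multiset (α × ℕ)) (c : α) (n : ℕ)
    (h : (c, n) ∈ s.map (fun p => (p.1, p.2 + 1))) : 1 ≤ n ∧ (c, n - 1) ∈ s := by
  obtain ⟨p, hp, he⟩ := Multiset.mem_map.mp h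
  obtain ⟨h1, h2⟩ := Prod.mk.injEq _ _ _ _ ▸ he
  subst h1
  refine ⟨by omega, ?_⟩
  have : n - 1 = p.2 := by omega
  rw [this]; exact hp

theorem stmt6_aux {α : Type} (T : RTree α) :
    ∀ (C : Finset α), C.Nonempty → ∀ (dT : α → ℕ),
      (∀ c ∈ C, (c, dT c) ∈ T.labDepths) →
      ∃ (t' : LTree α) (d' : α → ℕ), IsPrefixTree C t' d' ∧
        t'.height ≤ T.height ∧ ∀ c ∈ C, d' c ≤ dT c := by
  induction T with
  | leaf a =>
    intro C hC dT hmem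
    match a with
    | none =>
      obtain ⟨c, hc⟩ := hC
      exact absurd (hmem c hc) (by simp [RTree.labDepths])
    | some a =>
      have key : ∀ c ∈ C, c = a ∧ dT c = 0 := by
        intro c hc
        have := hmem c hc
        simp only [RTree.labDepths, Multiset.mem_singleton, Prod.mk.injEq] at this
        exact this
      obtain ⟨c0, hc0⟩ := hC
      have hCa : C = {a} := by
        apply Finset.eq_singleton_iff_unique_mem.mpr
        exact ⟨(key c0 hc0).1 ▸ hc0, fun c hc => (key c hc).1⟩
      refine ⟨LTree.leaf a, fun _ => 0, ?_, le_refl _, ?_⟩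
      · simp [IsPrefixTree, LTree.labDepths, hCa]
      · intro c hc; exact Nat.zero_le _
  | node1 t ih =>
    intro C hC dT hmem
    have key : ∀ c ∈ C, 1 ≤ dT c ∧ (c, dT c - 1) ∈ t.labDepths :=
      fun c hc => mem_map_succ _ _ _ (hmem c hc)
    obtain ⟨t', d', h1, h2, h3⟩ := ih C hC (fun c => dT c - 1) (fun c hc => (key c hc).2)
    exact ⟨t', d', h1, le_trans h2 (Nat.le_succ _),
      fun c hc => le_trans (h3 c hc) (Nat.sub_le _ _)⟩
  | node2 l r ihl ihr =>
    intro C hC dT hmem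
    classical
    have key : ∀ c ∈ C, 1 ≤ dT c ∧ (c, dT c - 1) ∈ l.labDepths + r.labDepths :=
      fun c hc => mem_map_succ _ _ _ (hmem c hc)
    set Cl := C.filter (fun c => (c, dT c - 1) ∈ l.labDepths) with hCldef
    have hsub : Cl ⊆ C := Finset.filter_subset _ _
    have hrm : ∀ c ∈ C \ Cl, (c, dT c - 1) ∈ r.labDepths := by
      intro c hc
      rw [Finset.mem_sdiff] at hc
      rcases Multiset.mem_add.mp (key c hc.1).2 with h | h
      · exact absurd (Finset.mem_filter.mpr ⟨hc.1, h⟩) hc.2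
      · exact h
    by_cases hCl : Cl.Nonempty
    · by_cases hCr : (C \ Cl).Nonempty
      · obtain ⟨tl, dl, pl1, pl2, pl3⟩ :=
          ihl Cl hCl (fun c => dT c - 1) (fun c hc => (Finset.mem_filter.mp hc).2)
        obtain ⟨tr, dr, pr1, pr2, pr3⟩ := ihr (C \ Cl) hCr (fun c => dT c - 1) hrm
        refine ⟨LTree.node tl tr, fun c => if c ∈ Cl then dl c + 1 else dr c + 1, ?_, ?_, ?_⟩
        · unfold IsPrefixTree at pl1 pr1 ⊢
          show (tl.labDepths + tr.labDepths).map _ = _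
          rw [pl1, pr1, Multiset.map_add, Multiset.map_map, Multiset.map_map]
          have hCval : C.val = Cl.val + (C \ Cl).val := by
            rw [Finset.sdiff_val]
            exact (add_tsub_cancel_of_le (Finset.val_le_iff.mpr hsub)).symm
          rw [hCval, Multiset.map_add]
          congr 1
          · refine Multiset.map_congr rfl (fun c hc => ?_)
            simp only [Function.comp_apply]
            rw [if_pos (by exact hc)]
          · refine Multiset.map_congr rfl (fun c hc => ?_)
            have hc' : c ∈ C \ Cl := hc
            simp only [Function.comp_apply]
            rw [if_neg (Finset.mem_sdiff.mp hc').2]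
        · show max tl.height tr.height + 1 ≤ max l.height r.height + 1
          exact Nat.succ_le_succ (max_le_max pl2 pr2)
        · intro c hc
          by_cases hcl : c ∈ Cl
          · simp only [if_pos hcl]
            have := pl3 c hcl; have := (key c hc).1; omega
          · simp only [if_neg hcl]
            have := pr3 c (Finset.mem_sdiff.mpr ⟨hc, hcl⟩); have := (key c hc).1; omega
      · have hCeq : Cl = C :=
          Finset.Subset.antisymm hsub
            (Finset.sdiff_eq_empty_iff_subset.mp (Finset.not_nonempty_iff_eq_empty.mp hCr))
        obtain ⟨t', d', p1, p2, p3⟩ := ihl C hC (fun c => dT c - 1)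
          (fun c hc => (Finset.mem_filter.mp (show c ∈ Cl by rw [hCeq]; exact hc)).2)
        refine ⟨t', d', p1, ?_, fun c hc => le_trans (p3 c hc) (Nat.sub_le _ _)⟩
        calc t'.height ≤ l.height := p2
          _ ≤ max l.height r.height + 1 := by omega
    · have hsd : C \ Cl = C := by
        rw [Finset.not_nonempty_iff_eq_empty.mp hCl, Finset.sdiff_empty]
      obtain ⟨t', d', p1, p2, p3⟩ := ihr C hC (fun c => dT c - 1)
        (fun c hc => hrm c (show c ∈ C \ Cl by rw [hsd]; exact hc))
      refine ⟨t', d', p1, ?_, fun c hc => le_trans (p3 c hc) (Nat.sub_le _ _)⟩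
      calc t'.height ≤ r.height := p2
        _ ≤ max l.height r.height + 1 := by omega


/-- Given any rooted binary tree `T` (unary nodes and unlabeled leaves allowed) in which each
character `c` of a nonempty set `C` appears as a leaf at depth `dT c`, there exists a valid
prefix tree `t'` for `C` (full binary, leaves exactly `C`) of height at most that of `T`
with `d' c ≤ dT c` for every `c ∈ C`. -/
theorem stmt_6 {α : Type} (C : Finset α) (hC : C.Nonempty) (T : RTree α) (dT : α → ℕ)
    (hmem : ∀ c ∈ C, (c, dT c) ∈ T.labDepths) :
    ∃ (t' : LTree α) (d' : α → ℕ), IsPrefixTree C t' d' ∧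
      t'.height ≤ T.height ∧ ∀ c ∈ C, d' c ≤ dT c :=
  stmt6_aux T C hC dT hmem
end

section
/- The rounded dynamic program dominates the exact one: for λ > 0 and rounding r(x) = ⌈x/λ⌉·λ, defining D̄ by the recurrence D̄(i,ℓ,L) = min_j { D̄(j,ℓ+1, L − r(P_{2i−j})) + q̂_{ℓ+1}·P_{2i−j} } over valid j with L − r(P_{2i−j}) ≥ 0, and base case D̄(0,ℓ,L) = 0, one has D(i,ℓ,L) ≥ D̄(i, ℓ, r(L) + (h−ℓ)·λ) for all valid i, ℓ ∈ [0,h], L ≥ 0. -/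
/-- The exact dynamic program `D(i, ℓ, L)`: minimum decode time over all forests rooted at
level `ℓ` (levels bounded by `h`) having exactly `i` internal nodes and code length at most
`L`, defined by the recurrence
`D(i,ℓ,L) = min_{j ∈ [max(0,2i−n), i−1], P_{2i−j} ≤ L} D(j, ℓ+1, L − P_{2i−j}) + q̂_{ℓ+1}·P_{2i−j}`
with base case `D(0,ℓ,L) = 0` (value `⊤` when infeasible). -/
noncomputable def dpD (P qhat : ℕ → ℕ) (n h : ℕ) : ℕ → ℕ → ℕ → ℕ∞
  | 0, _, _ => 0
  | (i + 1), ℓ, L =>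
    if h ≤ ℓ then ⊤
    else (Finset.Icc (2 * (i + 1) - n) i).attach.inf fun j =>
      if P (2 * (i + 1) - j.1) ≤ L then
        dpD P qhat n h j.1 (ℓ + 1) (L - P (2 * (i + 1) - j.1)) +
          (↑(qhat (ℓ + 1) * P (2 * (i + 1) - j.1)) : ℕ∞)
      else ⊤
termination_by i _ _ => i
decreasing_by
  have hj := j.2
  simp only [Finset.mem_Icc] at hj
  omega

/-- Rounding to the next multiple of `lam`: `r(x) = ⌈x / λ⌉·λ`. -/
def rnd (lam x : ℕ) : ℕ := ((x + lam - 1) / lam) * lam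

/-- The rounded dynamic program `D̄(i, ℓ, L)`, defined by the recurrence
`D̄(i,ℓ,L) = min_j { D̄(j, ℓ+1, L − r(P_{2i−j})) + q̂_{ℓ+1}·P_{2i−j} }` over valid
`j ∈ [max(0,2i−n), i−1]` with `L − r(P_{2i−j}) ≥ 0`, and base case `D̄(0,ℓ,L) = 0`. -/
noncomputable def dpDbar (P qhat : ℕ → ℕ) (lam n h : ℕ) : ℕ → ℕ → ℕ → ℕ∞
  | 0, _, _ => 0
  | (i + 1), ℓ, L =>
    if h ≤ ℓ then ⊤
    else (Finset.Icc (2 * (i + 1) - n) i).attach.inf fun j =>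
      if rnd lam (P (2 * (i + 1) - j.1)) ≤ L then
        dpDbar P qhat lam n h j.1 (ℓ + 1) (L - rnd lam (P (2 * (i + 1) - j.1))) +
          (↑(qhat (ℓ + 1) * P (2 * (i + 1) - j.1)) : ℕ∞)
      else ⊤
termination_by i _ _ => i
decreasing_by
  have hj := j.2
  simp only [Finset.mem_Icc] at hj
  omega

/-!
Induction on `i`. Rounding up to multiples of `λ` is subadditive up to one `λ`:
`r(L - P) + r(P) ≤ r(L) + λ`. Hence every level of the forest uses up at most one of the
`(h - ℓ)·λ` extra units of budget, and `D̄` is antitone in its budget.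
-/

lemma le_rnd {lam : ℕ} (hlam : 0 < lam) (x : ℕ) : x ≤ rnd lam x := by
  have h1 := Nat.div_add_mod (x + lam - 1) lam
  have h2 := Nat.mod_lt (x + lam - 1) hlam
  rw [rnd, Nat.mul_comm]
  omega

lemma rnd_le_add_sub_one (lam x : ℕ) : rnd lam x ≤ x + lam - 1 :=
  Nat.div_mul_le_self _ _

lemma rnd_mono (lam : ℕ) : Monotone (rnd lam) := fun _ _ hxy =>
  Nat.mul_le_mul_right _ (Nat.div_le_div_right (by omega))

lemma rnd_add_le (lam a b : ℕ) : rnd lam a + rnd lam b ≤ rnd lam (a + b) + lam := by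
  rcases Nat.eq_zero_or_pos lam with rfl | hlam
  · simp [rnd]
  have ha := rnd_le_add_sub_one lam a
  have hb := rnd_le_add_sub_one lam b
  have hab := le_rnd hlam (a + b)
  -- the bounds give slack `< 2 * lam`; as all terms are multiples of `lam`, it is `≤ lam`
  unfold rnd at *
  set p := (a + lam - 1) / lam
  set q := (b + lam - 1) / lam
  set r := (a + b + lam - 1) / lam
  have hlt : (p + q) * lam < (r + 2) * lam := by rw [Nat.add_mul, Nat.add_mul]; omega
  have := Nat.lt_of_mul_lt_mul_right hlt
  calc p * lam + q * lam = (p + q) * lam := (Nat.add_mul _ _ _).symm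
    _ ≤ (r + 1) * lam := Nat.mul_le_mul_right _ (by omega)
    _ = r * lam + lam := Nat.succ_mul _ _

lemma dpDbar_antitone (P qhat : ℕ → ℕ) (lam n h i ℓ : ℕ) :
    Antitone (dpDbar P qhat lam n h i ℓ) := by
  induction i using Nat.strong_induction_on generalizing ℓ with
  | _ i IH =>
  intro L L' hL
  match i with
  | 0 => simp [dpDbar]
  | i + 1 =>
    rw [dpDbar, dpDbar]
    split
    · exact le_rfl
    refine Finset.inf_mono_fun fun j _ => ?_
    have hj : j.1 < i + 1 := Nat.lt_succ_of_le (Finset.mem_Icc.1 j.2).2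
    by_cases hc : rnd lam (P (2 * (i + 1) - j.1)) ≤ L
    · rw [if_pos hc, if_pos (hc.trans hL)]
      exact add_le_add_left (IH j.1 hj (ℓ + 1) (by omega)) _
    · rw [if_neg hc]
      exact le_top

theorem stmt_10_general (P qhat : ℕ → ℕ) (lam n h : ℕ) :
    ∀ (i ℓ L : ℕ), ℓ ≤ h →
      dpDbar P qhat lam n h i ℓ (rnd lam L + (h - ℓ) * lam) ≤ dpD P qhat n h i ℓ L := by
  intro i
  induction i using Nat.strong_induction_on with
  | _ i IH =>
  intro ℓ L hℓ
  match i with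
  | 0 => simp [dpDbar, dpD]
  | i + 1 =>
    rw [dpDbar, dpD]
    split
    · exact le_top
    refine Finset.inf_mono_fun fun j _ => ?_
    have hj : j.1 < i + 1 := Nat.lt_succ_of_le (Finset.mem_Icc.1 j.2).2
    set p := P (2 * (i + 1) - j.1)
    by_cases hp : p ≤ L
    · have hsplit := rnd_add_le lam (L - p) p
      rw [Nat.sub_add_cancel hp] at hsplit
      have hslack : (h - ℓ) * lam = (h - (ℓ + 1)) * lam + lam := by
        rw [← Nat.succ_mul]; congr 1; omega
      have hfits : rnd lam p ≤ rnd lam L + (h - ℓ) * lam :=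
        (rnd_mono lam hp).trans (Nat.le_add_right _ _)
      have hbudget : rnd lam (L - p) + (h - (ℓ + 1)) * lam ≤
          rnd lam L + (h - ℓ) * lam - rnd lam p := by omega
      rw [if_pos hp, if_pos hfits]
      exact add_le_add_left ((dpDbar_antitone P qhat lam n h j.1 (ℓ + 1) hbudget).trans
        (IH j.1 hj (ℓ + 1) (L - p) (by omega))) _
    · rw [if_neg hp]
      exact le_top

/-- The rounded dynamic program dominates the exact one: for `λ > 0`,
`D(i, ℓ, L) ≥ D̄(i, ℓ, r(L) + (h−ℓ)·λ)` for all valid `i`, `ℓ ∈ [0,h]` and `L ≥ 0`. -/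
theorem stmt_10 (P qhat : ℕ → ℕ) (lam n h : ℕ) (hlam : 0 < lam) :
    ∀ (i ℓ L : ℕ), ℓ ≤ h →
      dpDbar P qhat lam n h i ℓ (rnd lam L + (h - ℓ) * lam) ≤ dpD P qhat n h i ℓ L :=
  stmt_10_general P qhat lam n h
end

section
/- For a blocking scheme and a prefix tree T, suppose character c belongs to a memory hierarchy with per-block access cost q and there are at least ⌈1/δ⌉ characters with frequency ≥ freq(c) in the same memory hierarchy at levels at or above that of c. Then q·freq(c) ≤ δ·Δ(T), so increasing the depth of c by one level (which can add at most one additional block access of cost q) increases Δ(T) by at most a δ fraction. -/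
/-- Decode-time analogue: let `Δc x` be the cumulative block-access cost incurred by
character `x` (sum of access costs of all blocks up to the block containing its depth),
so that `Δ(T) = Σ_x f x · Δc x`. If character `c` belongs to a memory hierarchy with
per-block access cost `q` and there are at least `⌈1/δ⌉` characters (including `c`) with
frequency ≥ `f c` in the same memory hierarchy at levels at or above that of `c` — each of
which hence incurs cost at least `q` — then `q·f c ≤ δ·Δ(T)`; consequently increasing the
depth of `c` by one level (adding at most one extra block access of cost `q`) increases
the decode time by at most a `δ` fraction. -/
theorem stmt_16 {C : Type} [Fintype C] (δ : ℝ) (hδ : 0 < δ) (f : C → ℕ)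
    (Δc : C → ℕ) (q : ℕ) (c : C) (S : Finset C) (hc : c ∈ S)
    (hS : ⌈1 / δ⌉₊ ≤ S.card)
    (hfreq : ∀ s ∈ S, f c ≤ f s) (hcost : ∀ s ∈ S, q ≤ Δc s) :
    ((q : ℝ) * (f c : ℝ) ≤ δ * ∑ x : C, (f x : ℝ) * (Δc x : ℝ)) ∧
      ((∑ x : C, (f x : ℝ) * (Δc x : ℝ)) + (q : ℝ) * (f c : ℝ)
        ≤ (1 + δ) * ∑ x : C, (f x : ℝ) * (Δc x : ℝ)) := by
  set Δ : ℝ := ∑ x : C, (f x : ℝ) * (Δc x : ℝ) with hΔ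
  have hkey : (q : ℝ) * (f c : ℝ) ≤ δ * Δ := by
    have h1 : (S.card : ℝ) * ((f c : ℝ) * (q : ℝ)) ≤ Δ := by
      calc (S.card : ℝ) * ((f c : ℝ) * (q : ℝ))
          = ∑ _s ∈ S, (f c : ℝ) * (q : ℝ) := by
            rw [Finset.sum_const, nsmul_eq_mul]
        _ ≤ ∑ s ∈ S, (f s : ℝ) * (Δc s : ℝ) := by
            apply Finset.sum_le_sum
            intro s hs
            have := hfreq s hs
            have := hcost s hs
            apply mul_le_mul <;> try positivity
            · exact_mod_cast hfreq s hs
            · exact_mod_cast hcost s hs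
        _ ≤ Δ := by
            rw [hΔ]
            apply Finset.sum_le_sum_of_subset_of_nonneg (Finset.subset_univ S)
            intro i _ _; positivity
    have h2 : (1 / δ) ≤ (S.card : ℝ) := by
      calc (1 / δ) ≤ (⌈1 / δ⌉₊ : ℝ) := Nat.le_ceil _
        _ ≤ (S.card : ℝ) := by exact_mod_cast hS
    have h3 : (1 / δ) * ((f c : ℝ) * (q : ℝ)) ≤ Δ := by
      refine le_trans (mul_le_mul_of_nonneg_right h2 (by positivity)) h1
    have := mul_le_mul_of_nonneg_left h3 hδ.le
    rw [mul_comm (q : ℝ)]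
    calc (f c : ℝ) * (q : ℝ) = δ * ((1/δ) * ((f c : ℝ) * (q:ℝ))) := by
          field_simp
      _ ≤ δ * Δ := by exact this
  exact ⟨hkey, by linarith⟩
end
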